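/- arXiv:math/0511390 — 2 statements merged into one kernel-verified Lean document; each statement's English description precedes it below -/
import Mathlib

section
/- Let (a_{i,j})_{i,j≥1} be a family of integers and let f = 1 + Σ_{i,j≥1} a_{i,j} U^i T^j be the corresponding formal power series in two variables over ℤ. Then there exists a unique family of integers (b_{i,j})_{i,j≥1} such that f = Π_{i,j≥1} (1 − U^i T^j)^{b_{i,j}}, where the infinite product is understood coefficientwise: for all m, n ≥ 1, the coefficient of U^m T^n in the finite product Π_{1≤i≤m, 1≤j≤n} (1 − U^i T^j)^{b_{i,j}} equals a_{m,n}. -/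
/-- Integer power of an element of a monoid with zero: for units this agrees with
the `zpow` in the unit group; negative exponents use `Ring.inverse`. -/
noncomputable def ringZpow {R : Type*} [MonoidWithZero R] (f : R) (n : ℤ) : R :=
  if 0 ≤ n then f ^ n.toNat else Ring.inverse f ^ (-n).toNat

/-- The series `ℤ⟦U,T⟧` of formal power series in two variables, with `U = X 0`, `T = X 1`. -/
noncomputable abbrev UT : Type := MvPowerSeries (Fin 2) ℤ

/-- The coefficient of `U^m T^n`. -/
noncomputable def coeffUT (m n : ℕ) : UT →ₗ[ℤ] ℤ :=
  MvPowerSeries.coeff (Finsupp.single (0 : Fin 2) m + Finsupp.single (1 : Fin 2) n)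

/-!
Modulo `x ^ 2` one has `(1 - x) ^ c ≡ 1 - c x` for every integer `c`. Taking `x = U^m T^n`, the
coefficient of `U^m T^n` in `∏_{i ≤ m, j ≤ n} (1 - U^i T^j)^{b i j}` is therefore the coefficient
in the product of the other factors, minus `b m n`; those factors only involve `b i j` with
`i + j < m + n`. So the equations determine `b m n` recursively on `m + n`, which gives existence
and uniqueness at once.
-/

open MvPowerSeries Finset

section CommRing

variable {R : Type*} [CommRing R]

theorem sq_dvd_one_add_pow_sub (x : R) (k : ℕ) : x ^ 2 ∣ (1 + x) ^ k - (1 + k * x) := by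
  induction k with
  | zero => simp
  | succ k ih =>
    obtain ⟨g, hg⟩ := ih
    exact ⟨(1 + x) * g + k, by push_cast; linear_combination (1 + x) * hg⟩

theorem sq_dvd_ringZpow_one_sub_sub {x : R} (hx : IsUnit (1 - x)) (c : ℤ) :
    x ^ 2 ∣ ringZpow (1 - x) c - (1 - c * x) := by
  rcases le_or_gt 0 c with hc | hc
  · lift c to ℕ using hc
    simpa [ringZpow, sub_eq_add_neg, neg_mul, mul_neg] using sq_dvd_one_add_pow_sub (-x) c
  · obtain ⟨k, rfl⟩ := Int.exists_eq_neg_ofNat hc.le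
    set y := Ring.inverse (1 - x)
    -- `y = 1 + x * y`, so `y ^ k ≡ 1 + k * x * y ≡ 1 + k * x` modulo `x ^ 2`
    have hy : y = 1 + x * y := by linear_combination Ring.mul_inverse_cancel _ hx
    have hpow : (x * y) ^ 2 ∣ y ^ k - (1 + k * (x * y)) := by
      simpa [← hy] using sq_dvd_one_add_pow_sub (x * y) k
    rw [ringZpow, if_neg (by omega), neg_neg, Int.toNat_natCast]
    obtain ⟨g, hg⟩ := dvd_trans (dvd_mul_right _ _) (mul_pow x y 2 ▸ hpow)
    exact ⟨g + k * y, by push_cast; linear_combination hg + k * x * hy⟩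

end CommRing

section MvPowerSeries

variable {σ R : Type*} [CommRing R] {d : σ →₀ ℕ}

theorem constantCoeff_monomial_of_ne_zero (hd : d ≠ 0) (a : R) :
    constantCoeff (monomial d a) = 0 := by
  classical
  rw [← coeff_zero_eq_constantCoeff_apply, coeff_monomial, if_neg hd.symm]

theorem isUnit_one_sub_monomial (hd : d ≠ 0) : IsUnit (1 - monomial d (1 : R)) := by
  rw [isUnit_iff_constantCoeff, map_sub, map_one, constantCoeff_monomial_of_ne_zero hd, sub_zero]
  exact isUnit_one

theorem exists_ringZpow_one_sub_monomial_eq (hd : d ≠ 0) (c : ℤ) :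
    ∃ g : MvPowerSeries σ R, ringZpow (1 - monomial d (1 : R)) c =
      1 - (c : MvPowerSeries σ R) * monomial d 1 + monomial (d + d) 1 * g := by
  obtain ⟨g, hg⟩ := sq_dvd_ringZpow_one_sub_sub (isUnit_one_sub_monomial (R := R) hd) c
  have hsq : monomial d (1 : R) ^ 2 = monomial (d + d) 1 := by
    rw [sq, monomial_mul_monomial, one_mul]
  exact ⟨g, by rw [← hsq, ← hg, add_sub_cancel]⟩

theorem constantCoeff_ringZpow_one_sub_monomial (hd : d ≠ 0) (c : ℤ) :
    constantCoeff (ringZpow (1 - monomial d (1 : R)) c) = 1 := by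
  obtain ⟨g, hg⟩ := exists_ringZpow_one_sub_monomial_eq (R := R) hd c
  have hdd : d + d ≠ 0 := by simpa using hd
  simp [hg, constantCoeff_monomial_of_ne_zero hd, constantCoeff_monomial_of_ne_zero hdd]

theorem coeff_mul_ringZpow_one_sub_monomial (hd : d ≠ 0) (P : MvPowerSeries σ R) (c : ℤ) :
    coeff d (P * ringZpow (1 - monomial d (1 : R)) c) = coeff d P - c * constantCoeff P := by
  obtain ⟨g, hg⟩ := exists_ringZpow_one_sub_monomial_eq (R := R) hd c
  have hdd : ¬d + d ≤ d := fun h => hd (by simpa using h)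
  have hexpand : P * ringZpow (1 - monomial d (1 : R)) c =
      P - c • (P * monomial d 1) + monomial (d + d) 1 * (g * P) := by
    rw [hg, zsmul_eq_mul]
    ring
  rw [hexpand, map_add, map_sub, map_zsmul, coeff_mul_monomial, coeff_monomial_mul,
    if_pos le_rfl, if_neg hdd, tsub_self, coeff_zero_eq_constantCoeff_apply, mul_one, add_zero,
    zsmul_eq_mul]

end MvPowerSeries

noncomputable def eulerFactor (i j : ℕ) (c : ℤ) : UT :=
  ringZpow (1 - X (0 : Fin 2) ^ i * X (1 : Fin 2) ^ j) c

noncomputable def boxProd (b : ℕ → ℕ → ℤ) (m n : ℕ) : UT :=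
  ∏ i ∈ Icc 1 m, ∏ j ∈ Icc 1 n, eulerFactor i j (b i j)

noncomputable def boxProdWithoutCorner (b : ℕ → ℕ → ℤ) (m n : ℕ) : UT :=
  ∏ p ∈ (Icc 1 m ×ˢ Icc 1 n).erase (m, n), eulerFactor p.1 p.2 (b p.1 p.2)

theorem eulerFactor_eq (i j : ℕ) (c : ℤ) :
    eulerFactor i j c = ringZpow (1 - monomial (Finsupp.single 0 i + Finsupp.single 1 j) 1) c := by
  rw [eulerFactor, X_pow_eq, X_pow_eq, monomial_mul_monomial, one_mul]

theorem single_add_single_ne_zero {i : ℕ} (hi : 1 ≤ i) (j : ℕ) :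
    Finsupp.single (0 : Fin 2) i + Finsupp.single 1 j ≠ 0 := by
  intro h
  have : i = 0 := by simpa using congr($h 0)
  omega

theorem coeffUT_boxProd {m n : ℕ} (hm : 1 ≤ m) (hn : 1 ≤ n) (b : ℕ → ℕ → ℤ) :
    coeffUT m n (boxProd b m n) = coeffUT m n (boxProdWithoutCorner b m n) - b m n := by
  have hcorner : (m, n) ∈ Icc 1 m ×ˢ Icc 1 n := by simp [hm, hn]
  have hconst : constantCoeff (boxProdWithoutCorner b m n) = 1 := by
    rw [boxProdWithoutCorner, map_prod]
    refine prod_eq_one fun p hp => ?_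
    have hp1 : 1 ≤ p.1 := (mem_Icc.1 (mem_product.1 (mem_of_mem_erase hp)).1).1
    rw [eulerFactor_eq, constantCoeff_ringZpow_one_sub_monomial (single_add_single_ne_zero hp1 _)]
  rw [boxProd, ← prod_product' (f := fun i j => eulerFactor i j (b i j)),
    ← prod_erase_mul _ _ hcorner]
  change coeffUT m n (boxProdWithoutCorner b m n * eulerFactor m n (b m n)) = _
  have := coeff_mul_ringZpow_one_sub_monomial (single_add_single_ne_zero hm n)
    (boxProdWithoutCorner b m n) (b m n)
  rw [hconst, mul_one] at this
  rwa [eulerFactor_eq]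

theorem coeffUT_boxProd_eq_iff {m n : ℕ} (hm : 1 ≤ m) (hn : 1 ≤ n) (a b : ℕ → ℕ → ℤ) :
    coeffUT m n (boxProd b m n) = a m n ↔
      b m n = coeffUT m n (boxProdWithoutCorner b m n) - a m n := by
  rw [coeffUT_boxProd hm hn]
  omega

noncomputable def eulerExponents (a : ℕ → ℕ → ℤ) (m n : ℕ) : ℤ :=
  coeffUT m n (∏ p ∈ ((Icc 1 m ×ˢ Icc 1 n).erase (m, n)).attach,
    eulerFactor p.1.1 p.1.2 (eulerExponents a p.1.1 p.1.2)) - a m n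
termination_by m + n
decreasing_by
  have hp := p.2
  simp only [mem_erase, mem_product, mem_Icc, ne_eq, Prod.ext_iff] at hp
  omega

theorem eulerExponents_eq (a : ℕ → ℕ → ℤ) (m n : ℕ) :
    eulerExponents a m n =
      coeffUT m n (boxProdWithoutCorner (eulerExponents a) m n) - a m n := by
  rw [eulerExponents, boxProdWithoutCorner,
    prod_attach _ fun p : ℕ × ℕ => eulerFactor p.1 p.2 (eulerExponents a p.1 p.2)]

theorem coeffUT_boxProd_eulerExponents {m n : ℕ} (hm : 1 ≤ m) (hn : 1 ≤ n) (a : ℕ → ℕ → ℤ) :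
    coeffUT m n (boxProd (eulerExponents a) m n) = a m n :=
  (coeffUT_boxProd_eq_iff hm hn a _).2 (eulerExponents_eq a m n)

theorem eq_of_coeffUT_boxProd_eq {a b b' : ℕ → ℕ → ℤ}
    (hb : ∀ m n, 1 ≤ m → 1 ≤ n → coeffUT m n (boxProd b m n) = a m n)
    (hb' : ∀ m n, 1 ≤ m → 1 ≤ n → coeffUT m n (boxProd b' m n) = a m n)
    {i j : ℕ} (hi : 1 ≤ i) (hj : 1 ≤ j) : b' i j = b i j := by
  induction hk : i + j using Nat.strong_induction_on generalizing i j with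
  | _ k ih =>
  have hlower : boxProdWithoutCorner b' i j = boxProdWithoutCorner b i j :=
    prod_congr rfl fun p hp => by
      simp only [mem_erase, mem_product, mem_Icc, ne_eq, Prod.ext_iff] at hp
      rw [ih (p.1 + p.2) (by omega) (by omega) (by omega) rfl]
  rw [(coeffUT_boxProd_eq_iff hi hj a b').1 (hb' i j hi hj),
    (coeffUT_boxProd_eq_iff hi hj a b).1 (hb i j hi hj), hlower]

/-- Lemma 3.1 (qTransform1): given any doubly-indexed family of integers `(a_{i,j})_{i,j ≥ 1}`,
there exists a unique family of integers `(b_{i,j})_{i,j ≥ 1}` such that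
`1 + Σ a_{i,j} U^i T^j = ∏_{i,j ≥ 1} (1 - U^i T^j)^{b_{i,j}}` coefficientwise: for all
`m, n ≥ 1` the coefficient of `U^m T^n` in the finite product
`∏_{1 ≤ i ≤ m} ∏_{1 ≤ j ≤ n} (1 - U^i T^j)^{b_{i,j}}` equals `a_{m,n}`. -/
theorem statement3 (a : ℕ → ℕ → ℤ) :
    ∃ b : ℕ → ℕ → ℤ,
      (∀ m n : ℕ, 1 ≤ m → 1 ≤ n →
        coeffUT m n
          (∏ i ∈ Finset.Icc 1 m, ∏ j ∈ Finset.Icc 1 n,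
            ringZpow (1 - MvPowerSeries.X (0 : Fin 2) ^ i * MvPowerSeries.X (1 : Fin 2) ^ j)
              (b i j)) = a m n) ∧
      (∀ b' : ℕ → ℕ → ℤ,
        (∀ m n : ℕ, 1 ≤ m → 1 ≤ n →
          coeffUT m n
            (∏ i ∈ Finset.Icc 1 m, ∏ j ∈ Finset.Icc 1 n,
              ringZpow (1 - MvPowerSeries.X (0 : Fin 2) ^ i * MvPowerSeries.X (1 : Fin 2) ^ j)
                (b' i j)) = a m n) →
        ∀ i j : ℕ, 1 ≤ i → 1 ≤ j → b' i j = b i j) := by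
  refine ⟨eulerExponents a, fun m n hm hn => coeffUT_boxProd_eulerExponents hm hn a, ?_⟩
  intro b' hb' i j hi hj
  exact eq_of_coeffUT_boxProd_eq (fun m n hm hn => coeffUT_boxProd_eulerExponents hm hn a) hb' hi hj
end

section
/- Let q ≥ 2 be an integer and let x be a real number with |x| < 1/q. Then the families d ↦ (1 − x^d)^{N*(2d,q)} and d ↦ (1 − x^d)^{M*(d,q)} over d ≥ 1 are multipliable (real-power exponentiation with positive bases), and Π_{d≥1} (1 − x^d)^{N*(2d,q)} · Π_{d≥1} (1 − x^d)^{M*(d,q)} = (1 − qx)/(1 − x)^{e(q)}. -/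
/-- `e(q)`: `1` if `q` is even, `2` if `q` is odd. -/
def efun (q : ℕ) : ℕ := if Even q then 1 else 2

/-- `N(d,q) = (1/d) Σ_{a ∣ d} μ(a) (q^{d/a} - 1)`. -/
noncomputable def Nfun (d q : ℕ) : ℚ :=
  (1 / (d : ℚ)) *
    ∑ a ∈ d.divisors, ((ArithmeticFunction.moebius a : ℤ) : ℚ) * ((q : ℚ) ^ (d / a) - 1)

/-- `N*(d,q)`: for even `d`, `(1/d) Σ_{a ∣ d, a odd} μ(a) (q^{d/(2a)} + 1 - e(q))`;
`N*(1,q) = e(q)`; and `N*(d,q) = 0` for odd `d > 1`. -/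
noncomputable def Nstar (d q : ℕ) : ℚ :=
  if Even d then
    (1 / (d : ℚ)) *
      ∑ a ∈ d.divisors.filter (fun a => Odd a),
        ((ArithmeticFunction.moebius a : ℤ) : ℚ) * ((q : ℚ) ^ (d / (2 * a)) + 1 - efun q)
  else if d = 1 then (efun q : ℚ) else 0

/-- `M*(d,q) = (N(d,q) - N*(d,q))/2`. -/
noncomputable def Mstar (d q : ℕ) : ℚ := (Nfun d q - Nstar d q) / 2

/-!
Write `E(d) = N*(2d,q) + M*(d,q)`. Splitting the divisors of `d` by parity and inverting,
`∑_{d ∣ n} d E(d) = q^n - e(q)` for every `n ≥ 1`. Taking logarithms,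
`∑_d E(d) log (1 - x^d) = -∑_{d,k ≥ 1} E(d) x^{dk} / k`, and since `|E(d)| ≤ 2 q^d` with
`q |x| < 1` this double series converges absolutely; regrouping it along `n = dk` gives
`-∑_n (q^n - e(q)) x^n / n = log (1 - q x) - e(q) log (1 - x)`. The same bounds, applied to
`N*(2d,q)` and `M*(d,q)` separately, make each product converge.
-/

open ArithmeticFunction Finset Real
open scoped ArithmeticFunction.Moebius

lemma one_le_efun (q : ℕ) : 1 ≤ efun q := by
  unfold efun; split <;> norm_num

lemma efun_le_two (q : ℕ) : efun q ≤ 2 := by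
  unfold efun; split <;> norm_num

lemma Nat.filter_odd_divisors_two_mul (d : ℕ) :
    {a ∈ (2 * d).divisors | Odd a} = {a ∈ d.divisors | Odd a} := by
  ext a
  simp only [mem_filter, Nat.mem_divisors, mul_ne_zero_iff, ne_eq, OfNat.ofNat_ne_zero,
    not_false_eq_true, true_and, and_congr_left_iff]
  exact fun ha _ => ⟨ha.coprime_two_right.dvd_of_dvd_mul_left, (Dvd.dvd.mul_left · 2)⟩

lemma sum_divisors_moebius {R : Type*} [Ring R] (n : ℕ) :
    ∑ a ∈ n.divisors, (μ a : R) = if n = 1 then 1 else 0 := by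
  have h := congr_arg (· n) (coe_moebius_mul_coe_zeta (R := R))
  simp only [coe_mul_zeta_apply, one_apply, intCoe_apply] at h
  exact h

lemma moebius_two_mul_of_odd {b : ℕ} (hb : Odd b) : μ (2 * b) = -μ b := by
  rw [isMultiplicative_moebius.map_mul_of_coprime (Nat.coprime_two_left.mpr hb),
    moebius_apply_prime Nat.prime_two, neg_one_mul]

lemma moebius_two_mul_of_even {b : ℕ} (hb : Even b) : μ (2 * b) = 0 := by
  refine moebius_eq_zero_of_not_squarefree fun h => ?_
  obtain ⟨c, rfl⟩ := hb
  exact absurd (Nat.isUnit_iff.mp (h 2 ⟨c, by ring⟩)) (by norm_num)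

/-- Only the divisors `a` and `2a` with `a` odd carry a nonzero Möbius weight. -/
lemma sum_divisors_moebius_mul_of_even {R : Type*} [CommRing R] (f : ℕ → R) {d : ℕ}
    (hd : Even d) :
    ∑ a ∈ d.divisors, (μ a : R) * f (d / a) =
      ∑ a ∈ d.divisors with Odd a, (μ a : R) * (f (d / a) - f (d / (2 * a))) := by
  have h_even : ∑ a ∈ d.divisors with ¬Odd a, (μ a : R) * f (d / a) =
      ∑ a ∈ d.divisors with Odd a, (μ (2 * a) : R) * f (d / (2 * a)) := by
    refine (sum_subset (fun a ha => ?_) (fun a ha hna => ?_)).symm.trans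
      (sum_image (fun a _ b _ h => by simpa using h))
    · obtain ⟨b, hb, rfl⟩ := mem_image.mp ha
      simp only [mem_filter, Nat.mem_divisors] at hb ⊢
      exact ⟨⟨Nat.Coprime.mul_dvd_of_dvd_of_dvd hb.2.coprime_two_right.symm
        (even_iff_two_dvd.mp hd) hb.1.1, hb.1.2⟩, by simp⟩
    · simp only [mem_filter, Nat.mem_divisors, Nat.not_odd_iff_even] at ha
      obtain ⟨b, rfl⟩ := even_iff_two_dvd.mp ha.2
      have hb : Even b := by
        refine Nat.not_odd_iff_even.mp fun hb => hna (mem_image.mpr ⟨b, ?_, rfl⟩)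
        exact mem_filter.mpr ⟨Nat.mem_divisors.mpr ⟨dvd_of_mul_left_dvd ha.1.1, ha.1.2⟩, hb⟩
      simp [moebius_two_mul_of_even hb]
  rw [← sum_filter_add_sum_filter_not _ (fun a => Odd a), h_even, ← sum_add_distrib]
  refine sum_congr rfl fun a ha => ?_
  rw [moebius_two_mul_of_odd (mem_filter.mp ha).2]
  push_cast
  ring

section Identities

variable (q : ℕ) {d : ℕ}

lemma mul_Nfun (hd : d ≠ 0) :
    d * Nfun d q = ∑ a ∈ d.divisors, (μ a : ℚ) * ((q : ℚ) ^ (d / a) - 1) := by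
  rw [Nfun, ← mul_assoc, mul_one_div_cancel (by exact_mod_cast hd), one_mul]

lemma mul_Nstar_of_even (hd : d ≠ 0) (he : Even d) :
    d * Nstar d q =
      ∑ a ∈ d.divisors with Odd a, (μ a : ℚ) * ((q : ℚ) ^ (d / (2 * a)) + 1 - efun q) := by
  rw [Nstar, if_pos he, ← mul_assoc, mul_one_div_cancel (by exact_mod_cast hd), one_mul]

lemma mul_Nstar_of_odd (ho : Odd d) : d * Nstar d q = efun q * ∑ a ∈ d.divisors, (μ a : ℚ) := by
  rw [sum_divisors_moebius, Nstar, if_neg (Nat.not_even_iff_odd.mpr ho)]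
  split_ifs with h1 <;> simp [h1]

lemma two_mul_mul_Nstar_two_mul (hd : d ≠ 0) :
    2 * d * Nstar (2 * d) q =
      ∑ a ∈ d.divisors with Odd a, (μ a : ℚ) * ((q : ℚ) ^ (d / a) + 1 - efun q) := by
  have h := mul_Nstar_of_even q (by positivity : 2 * d ≠ 0) (even_two_mul d)
  push_cast at h
  rw [h, Nat.filter_odd_divisors_two_mul]
  refine sum_congr rfl fun a _ => ?_
  rw [Nat.mul_div_mul_left _ _ two_pos]

lemma sum_moebius_mul_pow_sub_efun (hd : d ≠ 0) :
    ∑ a ∈ d.divisors, (μ a : ℚ) * ((q : ℚ) ^ (d / a) - efun q) =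
      d * (Nstar (2 * d) q + Mstar d q) := by
  have hN := mul_Nfun q hd
  have hN₂ := two_mul_mul_Nstar_two_mul q hd
  rcases Nat.even_or_odd d with he | ho
  · have hN' := mul_Nstar_of_even q hd he
    have hμ : ∑ a ∈ d.divisors, (μ a : ℚ) = 0 := by
      rw [sum_divisors_moebius, if_neg (by rintro rfl; exact Nat.not_even_one he)]
    have hodd := sum_divisors_moebius_mul_of_even (fun m => (q : ℚ) ^ m) he
    simp only [Mstar, mul_sub, mul_add, sum_sub_distrib, sum_add_distrib, ← sum_mul] at *
    linear_combination hodd / 2 - hN₂ / 2 - hN / 2 + hN' / 2 - (efun q - 1 / 2 : ℚ) * hμ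
  · have hN' := mul_Nstar_of_odd q ho
    rw [filter_true_of_mem fun a ha => ho.of_dvd_nat (Nat.dvd_of_mem_divisors ha)] at hN₂
    simp only [Mstar, mul_sub, mul_add, sum_sub_distrib, sum_add_distrib, ← sum_mul] at *
    linear_combination - hN₂ / 2 - hN / 2 + hN' / 2

lemma sum_divisors_mul_Nstar_add_Mstar {n : ℕ} (hn : n ≠ 0) :
    ∑ d ∈ n.divisors, d * (Nstar (2 * d) q + Mstar d q) = (q : ℚ) ^ n - efun q := by
  refine (sum_eq_iff_sum_mul_moebius_eq (f := fun d : ℕ => d * (Nstar (2 * d) q + Mstar d q))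
    (g := fun n => (q : ℚ) ^ n - efun q)).mpr (fun d hd => ?_) n hn.bot_lt
  rw [Nat.sum_divisorsAntidiagonal (fun a b => (μ a : ℚ) * ((q : ℚ) ^ b - efun q))]
  exact sum_moebius_mul_pow_sub_efun q hd.ne'

end Identities

section Bounds

lemma abs_one_div_mul_sum_moebius_le {d : ℕ} {s : Finset ℕ} (hs : s ⊆ d.divisors) {t : ℕ → ℚ}
    {B : ℚ} (hB : 0 ≤ B) (ht : ∀ a ∈ s, |t a| ≤ B) :
    |1 / (d : ℚ) * ∑ a ∈ s, (μ a : ℚ) * t a| ≤ B := by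
  rcases eq_or_ne d 0 with rfl | hd
  · simpa using hB
  have hsum : |∑ a ∈ s, (μ a : ℚ) * t a| ≤ d * B := calc
    |∑ a ∈ s, (μ a : ℚ) * t a| ≤ ∑ a ∈ s, B := by
      refine (abs_sum_le_sum_abs _ _).trans (sum_le_sum fun a ha => ?_)
      rw [abs_mul]
      exact (mul_le_mul (by exact_mod_cast abs_moebius_le_one) (ht a ha) (abs_nonneg _)
        zero_le_one).trans_eq (one_mul B)
    _ ≤ d * B := by
      rw [sum_const, nsmul_eq_mul]
      gcongr
      exact_mod_cast (card_le_card hs).trans (Nat.card_divisors_le_self d)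
  rw [abs_mul, abs_of_pos (by positivity), one_div_mul_eq_div, div_le_iff₀ (by positivity)]
  linarith

variable {q : ℕ}

lemma abs_pow_add_one_sub_efun_le (hq : 1 ≤ q) {m d : ℕ} (hmd : m ≤ d) :
    |(q : ℚ) ^ m + 1 - efun q| ≤ (q : ℚ) ^ d := by
  have h₁ : (1 : ℚ) ≤ (q : ℚ) ^ m := one_le_pow₀ (by exact_mod_cast hq)
  have h₂ : (q : ℚ) ^ m ≤ (q : ℚ) ^ d := pow_le_pow_right₀ (by exact_mod_cast hq) hmd
  have he₁ : (1 : ℚ) ≤ efun q := by exact_mod_cast one_le_efun q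
  have he₂ : (efun q : ℚ) ≤ 2 := by exact_mod_cast efun_le_two q
  rw [abs_le]
  constructor <;> linarith

lemma abs_Nfun_le (hq : 1 ≤ q) (d : ℕ) : |Nfun d q| ≤ (q : ℚ) ^ d := by
  refine abs_one_div_mul_sum_moebius_le subset_rfl (by positivity) fun a _ => ?_
  have h₁ : (1 : ℚ) ≤ (q : ℚ) ^ (d / a) := one_le_pow₀ (by exact_mod_cast hq)
  have h₂ : (q : ℚ) ^ (d / a) ≤ (q : ℚ) ^ d :=
    pow_le_pow_right₀ (by exact_mod_cast hq) (Nat.div_le_self d a)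
  rw [abs_le]
  constructor <;> linarith

lemma abs_Nstar_two_mul_le (hq : 1 ≤ q) (d : ℕ) : |Nstar (2 * d) q| ≤ (q : ℚ) ^ d := by
  rw [Nstar, if_pos (even_two_mul d)]
  refine abs_one_div_mul_sum_moebius_le (filter_subset _ _) (by positivity) fun a _ => ?_
  rw [Nat.mul_div_mul_left _ _ two_pos]
  exact abs_pow_add_one_sub_efun_le hq (Nat.div_le_self d a)

lemma abs_Nstar_le (hq : 2 ≤ q) (d : ℕ) : |Nstar d q| ≤ (q : ℚ) ^ d := by
  rcases Nat.even_or_odd' d with ⟨m, rfl | rfl⟩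
  · refine (abs_Nstar_two_mul_le (by omega) m).trans (pow_le_pow_right₀ ?_ (by omega))
    exact_mod_cast (by omega : 1 ≤ q)
  · rw [Nstar, if_neg (by simp)]
    split_ifs with h
    · rw [h, pow_one, abs_of_nonneg (Nat.cast_nonneg _)]
      exact_mod_cast (efun_le_two q).trans hq
    · simp

lemma abs_Mstar_le (hq : 2 ≤ q) (d : ℕ) : |Mstar d q| ≤ (q : ℚ) ^ d := by
  have h := (abs_sub _ _).trans (add_le_add (abs_Nfun_le (q := q) (by omega) d) (abs_Nstar_le hq d))
  rw [Mstar, abs_div, abs_two]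
  linarith

end Bounds

section Lambert

variable {c : ℕ → ℝ} {C R x : ℝ}

lemma abs_pow_lt_one (hx : |x| < 1) {n : ℕ} (hn : n ≠ 0) : |x ^ n| < 1 := by
  rw [abs_pow]
  exact pow_lt_one₀ (abs_nonneg x) hx hn

lemma hasSum_mul_pow_mul_div (hx : |x| < 1) (d : ℕ+) :
    HasSum (fun k : ℕ+ => c d * x ^ (d * k : ℕ) / k) (-(c d * log (1 - x ^ (d : ℕ)))) := by
  have hxd := abs_pow_lt_one hx d.ne_zero
  rw [hasSum_pnat_iff_hasSum_succ (f := fun k => c d * x ^ (d * k) / k), ← mul_neg]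
  refine ((hasSum_pow_div_log_of_abs_lt_one hxd).mul_left (c d)).congr_fun fun k => ?_
  rw [pow_mul, Nat.cast_succ, mul_div_assoc]

lemma summable_mul_pow_mul_div (hc : ∀ d, |c d| ≤ C * R ^ d) (hR : 0 ≤ R) (hRx : R * |x| < 1)
    (hx : |x| < 1) : Summable (fun p : ℕ+ × ℕ+ => c p.1 * x ^ (p.1 * p.2 : ℕ) / p.2) := by
  have hrow : Summable (fun d : ℕ+ => (R * |x|) ^ (d : ℕ)) :=
    summable_pnat_iff_summable_nat.mpr (summable_geometric_of_lt_one (by positivity) hRx)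
  have hcol : Summable (fun k : ℕ+ => |x| ^ ((k : ℕ) - 1)) :=
    (summable_pnat_iff_summable_succ (f := fun k => |x| ^ (k - 1))).mpr
      (by simpa using summable_geometric_of_lt_one (abs_nonneg x) hx)
  refine Summable.of_norm_bounded ((hrow.mul_of_nonneg hcol (fun _ => by positivity)
    (fun _ => by positivity)).mul_left C) fun ⟨d, k⟩ => ?_
  have hdk : |x| ^ (d * k : ℕ) ≤ |x| ^ (d : ℕ) * |x| ^ ((k : ℕ) - 1) := by
    rw [← pow_add]
    refine pow_le_pow_of_le_one (abs_nonneg x) hx.le ?_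
    obtain ⟨j, hj⟩ : ∃ j, (k : ℕ) = j + 1 := ⟨k.natPred, k.natPred_add_one.symm⟩
    rw [hj, Nat.add_sub_cancel]
    nlinarith [d.pos]
  calc ‖c d * x ^ (d * k : ℕ) / k‖ ≤ |c d| * |x| ^ (d * k : ℕ) := by
        rw [norm_div, norm_mul, norm_pow, Real.norm_eq_abs, Real.norm_eq_abs, Real.norm_natCast]
        exact div_le_self (by positivity) (Nat.one_le_cast.mpr k.pos)
    _ ≤ C * R ^ (d : ℕ) * (|x| ^ (d : ℕ) * |x| ^ ((k : ℕ) - 1)) :=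
        mul_le_mul (hc d) hdk (by positivity) ((abs_nonneg _).trans (hc d))
    _ = C * ((R * |x|) ^ (d : ℕ) * |x| ^ ((k : ℕ) - 1)) := by ring

lemma summable_mul_log_one_sub_pow (hc : ∀ d, |c d| ≤ C * R ^ d) (hR : 0 ≤ R)
    (hRx : R * |x| < 1) (hx : |x| < 1) :
    Summable (fun d : ℕ+ => c d * log (1 - x ^ (d : ℕ))) :=
  ((summable_mul_pow_mul_div hc hR hRx hx).prod.congr fun d =>
    (hasSum_mul_pow_mul_div hx d).tsum_eq).neg.congr fun _ => neg_neg _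

/-- Regrouping the double series `∑_{d,k} c(d) x^{dk} / k` along `n = dk`. -/
lemma hasSum_mul_log_one_sub_pow (hc : ∀ d, |c d| ≤ C * R ^ d) (hR : 0 ≤ R)
    (hRx : R * |x| < 1) (hx : |x| < 1) {s : ℝ}
    (hs : HasSum (fun n : ℕ+ => (∑ d ∈ (n : ℕ).divisors, d * c d) * x ^ (n : ℕ) / n) s) :
    HasSum (fun d : ℕ+ => c d * log (1 - x ^ (d : ℕ))) (-s) := by
  have hG := summable_mul_pow_mul_div hc hR hRx hx
  have hfib := (sigmaAntidiagonalEquivProd.hasSum_iff.mpr hG.hasSum).sigma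
    fun n => hasSum_fintype _
  have hfib' : HasSum (fun n : ℕ+ => (∑ d ∈ (n : ℕ).divisors, d * c d) * x ^ (n : ℕ) / n)
      (∑' p : ℕ+ × ℕ+, c p.1 * x ^ (p.1 * p.2 : ℕ) / p.2) := by
    refine hfib.congr_fun fun n => ?_
    simp only [Function.comp_apply, sigmaAntidiagonalEquivProd, divisorsAntidiagonalFactors,
      Equiv.coe_fn_mk, PNat.mk_coe]
    rw [univ_eq_attach, sum_attach _ fun p : ℕ × ℕ => c p.1 * x ^ (p.1 * p.2) / p.2,
      Nat.sum_divisorsAntidiagonal fun a b => c a * x ^ (a * b) / b, sum_mul, sum_div]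
    refine sum_congr rfl fun d hd => ?_
    have hdn := Nat.dvd_of_mem_divisors hd
    have hd0 : (d : ℝ) ≠ 0 := Nat.cast_ne_zero.mpr (Nat.pos_of_mem_divisors hd).ne'
    rw [Nat.mul_div_cancel' hdn, Nat.cast_div hdn hd0]
    field_simp
  have hrows := hG.hasSum.prod_fiberwise fun d => hasSum_mul_pow_mul_div hx d
  rw [hfib'.unique hs] at hrows
  simpa using hrows.neg

lemma hasSum_pow_sub_mul_pow_div {y : ℝ} (e : ℝ) (hyx : |y * x| < 1) (hx : |x| < 1) :
    HasSum (fun n : ℕ+ => (y ^ (n : ℕ) - e) * x ^ (n : ℕ) / n)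
      (e * log (1 - x) - log (1 - y * x)) := by
  rw [hasSum_pnat_iff_hasSum_succ (f := fun n => (y ^ n - e) * x ^ n / n),
    show e * log (1 - x) - log (1 - y * x) = -log (1 - y * x) - e * -log (1 - x) by ring]
  refine ((hasSum_pow_div_log_of_abs_lt_one hyx).sub
    ((hasSum_pow_div_log_of_abs_lt_one hx).mul_left e)).congr_fun fun n => ?_
  push_cast
  ring

lemma hasProd_one_sub_pow_rpow (hx : |x| < 1) {s : ℝ}
    (h : HasSum (fun d : ℕ+ => c d * log (1 - x ^ (d : ℕ))) s) :
    HasProd (fun d : ℕ => (1 - x ^ (d + 1)) ^ c (d + 1)) (exp s) := by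
  rw [← hasProd_pnat_iff_hasProd_succ (f := fun d => (1 - x ^ d) ^ c d)]
  refine h.rexp.congr_fun fun d => ?_
  have hpos : 0 < 1 - x ^ (d : ℕ) :=
    sub_pos.mpr ((le_abs_self _).trans_lt (abs_pow_lt_one hx d.ne_zero))
  rw [Function.comp_apply, rpow_def_of_pos hpos, mul_comm]

end Lambert

/-- Lemma 2.3(d): for an integer `q ≥ 2` and a real `x` with `|x| < 1/q`, the families
`d ↦ (1 - x^d)^{N*(2d,q)}` and `d ↦ (1 - x^d)^{M*(d,q)}` over `d ≥ 1` are multipliable, and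
`∏_{d ≥ 1} (1 - x^d)^{N*(2d,q)} · ∏_{d ≥ 1} (1 - x^d)^{M*(d,q)} = (1 - qx)/(1 - x)^{e(q)}`. -/
theorem statement9 (q : ℕ) (hq : 2 ≤ q) (x : ℝ) (hx : |x| < 1 / q) :
    Multipliable (fun d : ℕ => (1 - x ^ (d + 1)) ^ ((Nstar (2 * (d + 1)) q : ℚ) : ℝ)) ∧
    Multipliable (fun d : ℕ => (1 - x ^ (d + 1)) ^ ((Mstar (d + 1) q : ℚ) : ℝ)) ∧
    (∏' d : ℕ, (1 - x ^ (d + 1)) ^ ((Nstar (2 * (d + 1)) q : ℚ) : ℝ)) *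
      (∏' d : ℕ, (1 - x ^ (d + 1)) ^ ((Mstar (d + 1) q : ℚ) : ℝ)) =
    (1 - q * x) / (1 - x) ^ efun q := by
  have hq₀ : (0 : ℝ) < q := by positivity
  have hqx' : (q : ℝ) * |x| < 1 := (lt_div_iff₀' hq₀).mp hx
  have hqx : |q * x| < 1 := by rwa [abs_mul, Nat.abs_cast]
  have hx₁ : |x| < 1 :=
    hx.trans_le (div_le_one_of_le₀ (by exact_mod_cast (by omega : 1 ≤ q)) hq₀.le)
  set c₁ : ℕ → ℝ := fun d => (Nstar (2 * d) q : ℝ)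
  set c₂ : ℕ → ℝ := fun d => (Mstar d q : ℝ)
  have hc₁ (d : ℕ) : |c₁ d| ≤ 1 * (q : ℝ) ^ d := by
    rw [one_mul, ← Rat.cast_abs]
    exact_mod_cast abs_Nstar_two_mul_le (by omega) d
  have hc₂ (d : ℕ) : |c₂ d| ≤ 1 * (q : ℝ) ^ d := by
    rw [one_mul, ← Rat.cast_abs]
    exact_mod_cast abs_Mstar_le hq d
  have hc (d : ℕ) : |c₁ d + c₂ d| ≤ 2 * (q : ℝ) ^ d :=
    (abs_add_le _ _).trans (by linarith [hc₁ d, hc₂ d])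
  obtain ⟨s₁, hs₁⟩ := summable_mul_log_one_sub_pow hc₁ hq₀.le hqx' hx₁
  obtain ⟨s₂, hs₂⟩ := summable_mul_log_one_sub_pow hc₂ hq₀.le hqx' hx₁
  have hdiv (n : ℕ+) :
      ∑ d ∈ (n : ℕ).divisors, (d : ℝ) * (c₁ d + c₂ d) = (q : ℝ) ^ (n : ℕ) - efun q := by
    have h := congr_arg (Rat.cast : ℚ → ℝ) (sum_divisors_mul_Nstar_add_Mstar q n.ne_zero)
    push_cast at h
    exact h
  have hs : s₁ + s₂ = log (1 - q * x) - efun q * log (1 - x) := by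
    have h := hasSum_mul_log_one_sub_pow hc hq₀.le hqx' hx₁
      ((hasSum_pow_sub_mul_pow_div _ hqx hx₁).congr_fun fun n => by rw [hdiv])
    rw [neg_sub] at h
    exact (hs₁.add hs₂).unique (h.congr_fun fun d => (add_mul _ _ _).symm)
  have hp₁ := hasProd_one_sub_pow_rpow hx₁ hs₁
  have hp₂ := hasProd_one_sub_pow_rpow hx₁ hs₂
  refine ⟨hp₁.multipliable, hp₂.multipliable, ?_⟩
  have h₁ : 0 < 1 - q * x := by linarith [le_abs_self ((q : ℝ) * x)]
  have h₂ : 0 < 1 - x := by linarith [le_abs_self x]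
  rw [hp₁.tprod_eq, hp₂.tprod_eq, ← exp_add, hs, exp_sub, exp_log h₁, exp_nat_mul, exp_log h₂]
end
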